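/- Let k ≥ 1 and h ≥ 1 be integers and K, δ > 0 reals. Let G be a graph with maximum degree at most Kδ, let x, y be vertices of G, and let i, j be nonnegative integers with i + j < 2k. If the pair (x,y) is (i,j)-rich (with parameters k, h, K, δ), then there exist h pairwise internally vertex-disjoint paths of length 2k between x and y in G. -/

import Mathlib

open SimpleGraph

variable {V : Type*} [Fintype V] [DecidableEq V]

/-- The restriction of `p : ℕ → V` to `[0, ℓ]` is a path in `G`: consecutive vertices are
adjacent and all vertices `p 0, …, p ℓ` are distinct. -/
def PathSeq (G : SimpleGraph V) (ℓ : ℕ) (p : ℕ → V) : Prop :=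
  (∀ i, i < ℓ → G.Adj (p i) (p (i + 1))) ∧
  ∀ i j, i < j → j ≤ ℓ → p i ≠ p j

/-- `p` is padded beyond index `ℓ`; used so that each finite sequence corresponds to a
unique function `ℕ → V` when counting. -/
def PadSeq (ℓ : ℕ) (p : ℕ → V) : Prop := ∀ i, ℓ ≤ i → p i = p ℓ

/-- `f(ℓ, L) = L^(5^ℓ)`. -/
noncomputable def fBound (ℓ : ℕ) (L : ℝ) : ℝ := L ^ (5 ^ ℓ)

/-- The recursive notion of an `L`-good path of length `ℓ` (as a sequence `p 0, …, p ℓ`):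
`p` is a path, every proper subpath is `L`-good, and the number of `L`-admissible paths of
length `ℓ` from `p 0` to `p ℓ` is at most `f(ℓ, L)`. -/
def Good (G : SimpleGraph V) (L : ℝ) (ℓ : ℕ) (p : ℕ → V) : Prop :=
  (PathSeq G ℓ p ∧
    ∀ i j, i < j → j ≤ ℓ → ¬(i = 0 ∧ j = ℓ) → Good G L (j - i) (fun a => p (i + a))) ∧
  (Set.ncard {q : ℕ → V | q 0 = p 0 ∧ q ℓ = p ℓ ∧ PadSeq ℓ q ∧ PathSeq G ℓ q ∧
      ∀ i j, i < j → j ≤ ℓ → ¬(i = 0 ∧ j = ℓ) → Good G L (j - i) (fun a => q (i + a))} : ℝ)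
    ≤ fBound ℓ L
termination_by ℓ
decreasing_by all_goals omega

/-- `L`-admissible: a path all of whose proper subpaths are `L`-good. -/
def Admissible (G : SimpleGraph V) (L : ℝ) (ℓ : ℕ) (p : ℕ → V) : Prop :=
  PathSeq G ℓ p ∧
    ∀ i j, i < j → j ≤ ℓ → ¬(i = 0 ∧ j = ℓ) → Good G L (j - i) (fun a => p (i + a))

/-- There exist `N` pairwise internally vertex-disjoint paths of length `m` from `x` to `y`. -/
def ManyDisjointPaths (G : SimpleGraph V) (m : ℕ) (x y : V) (N : ℕ) : Prop :=
  ∃ P : Fin N → (ℕ → V),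
    (∀ a, PathSeq G m (P a) ∧ P a 0 = x ∧ P a m = y) ∧
    (∀ a b, a ≠ b → ∃ i, i ≤ m ∧ P a i ≠ P b i) ∧
    ∀ a b, a ≠ b → ∀ i j, 0 < i → i < m → 0 < j → j < m → P a i ≠ P b j

/-- A pair `(x, y)` of distinct vertices is `(i,j)`-rich (with parameters `k`, `h`, `K`, `δ`). -/
def Rich (G : SimpleGraph V) (k h : ℕ) (K δ : ℝ) (i j : ℕ) (x y : V) : Prop :=
  x ≠ y ∧
  ((2 * (i + j) * h * (2 * k + 1) + 2 * (i + 1) * j : ℕ) : ℝ) *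
      (K * δ) ^ ((i : ℤ) + (j : ℤ) - 1) <
    (Set.ncard {PQ : (ℕ → V) × (ℕ → V) |
      PathSeq G i PQ.1 ∧ PQ.1 0 = x ∧ PadSeq i PQ.1 ∧
      PathSeq G j PQ.2 ∧ PQ.2 0 = y ∧ PadSeq j PQ.2 ∧
      ManyDisjointPaths G (2 * k - i - j) (PQ.1 i) (PQ.2 j) ((h + 2) * (2 * k + 1) + 1)} : ℝ)

/-- `(x, y)` is an `(ℓ, L)`-bad pair: there is an `L`-admissible but not `L`-good path of
length `ℓ` from `x` to `y`. -/
def Bad (G : SimpleGraph V) (L : ℝ) (ℓ : ℕ) (x y : V) : Prop :=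
  ∃ p : ℕ → V, p 0 = x ∧ p ℓ = y ∧ Admissible G L ℓ p ∧ ¬ Good G L ℓ p

/-- `G` contains the `(s-1)`-subdivision of the multigraph on `Fin t` with multiplicity
function `m` as a subgraph: each parallel edge between `a < b` is replaced by a path of
length `s`, these paths being pairwise internally vertex-disjoint, with internal vertices
distinct from all branch vertices. -/
def ContainsMultiSubdiv (G : SimpleGraph V) (t : ℕ) (m : Fin t → Fin t → ℕ) (s : ℕ) : Prop :=
  ∃ (φ : Fin t → V) (π : (a : Fin t) → (b : Fin t) → Fin (m a b) → (ℕ → V)),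
    Function.Injective φ ∧
    (∀ a b, a < b → ∀ c, PathSeq G s (π a b c) ∧ π a b c 0 = φ a ∧ π a b c s = φ b) ∧
    (∀ a b, a < b → ∀ c, ∀ i, 0 < i → i < s → ∀ d, π a b c i ≠ φ d) ∧
    (∀ a b, a < b → ∀ a' b', a' < b' → ∀ (c : Fin (m a b)) (c' : Fin (m a' b')),
      (a, b, (c : ℕ)) ≠ (a', b', (c' : ℕ)) →
      ∀ i i', 0 < i → i < s → 0 < i' → i' < s → π a b c i ≠ π a' b' c' i')

/-- The number of vertices of `H = F^{2k-1}` where `F` is the multigraph on `Fin t` with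
multiplicity function `m`: the `t` branch vertices plus `2k - 1` internal vertices for each
edge (counted with multiplicity). -/
def nH (t k : ℕ) (m : Fin t → Fin t → ℕ) : ℕ :=
  t + (2 * k - 1) * ∑ p : Fin t × Fin t, if p.1 < p.2 then m p.1 p.2 else 0

/-- The minimum degree of `G`. -/
noncomputable def minDeg (G : SimpleGraph V) : ℕ :=
  sInf {d | ∃ v, (G.neighborSet v).ncard = d}

/-- The maximum degree of `G`. -/
noncomputable def maxDeg (G : SimpleGraph V) : ℕ :=
  sSup {d | ∃ v, (G.neighborSet v).ncard = d}

/-- Adjacency in the auxiliary graph `𝒢_ℓ(v)`: the `2k+1` vertices `u 0 = v, u 1, …, u k,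
u' 1, …, u' k` are all distinct and there exist `0 ≤ i, j ≤ k-1` such that the pair
`(u ℓ, u' ℓ)` is `(i,j)`-rich (symmetrised so that this defines a graph). -/
def AuxAdj (G : SimpleGraph V) (k h : ℕ) (K δ : ℝ) (ℓ : Fin (k + 1))
    (u u' : Fin (k + 1) → V) : Prop :=
  Function.Injective u ∧ Function.Injective u' ∧
  (∀ a b : Fin (k + 1), a ≠ 0 → b ≠ 0 → u a ≠ u' b) ∧
  ∃ i j : ℕ, i < k ∧ j < k ∧
    (Rich G k h K δ i j (u ℓ) (u' ℓ) ∨ Rich G k h K δ i j (u' ℓ) (u ℓ))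

/-- `r` satisfies the `k`-colour Ramsey property for `t`: every `k`-colouring of the edges of
the complete graph on `r` vertices contains a monochromatic complete graph on `t` vertices. -/
def RamseyProp (k t r : ℕ) : Prop :=
  ∀ χ : Fin r → Fin r → Fin k, (∀ a b, χ a b = χ b a) →
    ∃ (col : Fin k) (s : Finset (Fin r)), s.card = t ∧
      ∀ a ∈ s, ∀ b ∈ s, a ≠ b → χ a b = col

/-! The paths are built one at a time. While fewer than `h` are built, their inner vertices form a
set `F` of fewer than `h (2k+1)` vertices. A rich pair `(P, Q)` is spoiled if `P` meets `F ∪ {y}`,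
`Q` meets `F ∪ {x}`, or `P` meets `Q`; each such coincidence pins one vertex of a walk, so it
occurs for at most `(Kδ)^(i+j-1)` pairs of walks from `x` and `y`, and richness leaves a pair
avoiding all of them. Of the more than `(h+2)(2k+1)` internally disjoint paths of length
`2k - i - j` joining the ends of `P` and `Q`, fewer than `h (2k+1)` meet `F`, `P` or `Q`; `P`, one
of the others and `Q` reversed form a new `x`–`y` path of length `2k` avoiding `F`. -/

omit [Fintype V] [DecidableEq V]

lemma ncard_le_card_mul_of_subset_biUnion {α ι : Type*} {s : Set α} {E : Finset ι}
    {B : ι → Set α} {c : ℝ} (hs : s ⊆ ⋃ e ∈ E, B e)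
    (hB : ∀ e ∈ E, ((s ∩ B e).ncard : ℝ) ≤ c) :
    (s.ncard : ℝ) ≤ E.card * c := by
  have hsplit : s = ⋃ e ∈ E, s ∩ B e := by
    rw [← Set.inter_iUnion₂]
    exact (Set.inter_eq_left.2 hs).symm
  have hunion := E.set_ncard_biUnion_le fun e => s ∩ B e
  rw [← hsplit] at hunion
  calc (s.ncard : ℝ) ≤ ∑ e ∈ E, ((s ∩ B e).ncard : ℝ) := by exact_mod_cast hunion
    _ ≤ ∑ _e ∈ E, c := Finset.sum_le_sum hB
    _ = E.card * c := by rw [Finset.sum_const, nsmul_eq_mul]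

lemma ncard_le_mul_of_fiber_le {α β : Type*} {t : Set (α × β)} {A : Set α} {c₁ c₂ : ℝ}
    (hA : A.Finite) (htA : ∀ z ∈ t, z.1 ∈ A) (hAc : (A.ncard : ℝ) ≤ c₁)
    (hfib : ∀ a ∈ A, ({b | (a, b) ∈ t}.ncard : ℝ) ≤ c₂) (hc₂ : 0 ≤ c₂) :
    (t.ncard : ℝ) ≤ c₁ * c₂ := by
  have hslice : ∀ a, t ∩ {z | z.1 = a} = Prod.mk a '' {b | (a, b) ∈ t} := by
    intro a
    ext ⟨a', b⟩
    simp only [Set.mem_inter_iff, Set.mem_ofPred_eq, Set.mem_image, Prod.mk.injEq]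
    constructor
    · rintro ⟨hz, rfl⟩
      exact ⟨b, hz, rfl, rfl⟩
    · rintro ⟨b, hb, rfl, rfl⟩
      exact ⟨hb, rfl⟩
  calc (t.ncard : ℝ) ≤ hA.toFinset.card * c₂ :=
        ncard_le_card_mul_of_subset_biUnion
          (fun z hz => Set.mem_biUnion (hA.mem_toFinset.2 (htA z hz)) rfl) fun a ha => by
            rw [hslice, Set.ncard_image_of_injective _ (Prod.mk_right_injective a)]
            exact hfib a (hA.mem_toFinset.1 ha)
    _ ≤ c₁ * c₂ := by
        rw [← Set.ncard_eq_toFinset_card _ hA]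
        exact mul_le_mul_of_nonneg_right hAc hc₂

section Sequences

variable {G : SimpleGraph V}

def seqAppend (a : ℕ) (p q : ℕ → V) : ℕ → V := fun u => if u ≤ a then p u else q (u - a)

def seqReverse (b : ℕ) (q : ℕ → V) : ℕ → V := fun u => q (b - u)

lemma seqAppend_apply_zero (a : ℕ) (p q : ℕ → V) : seqAppend a p q 0 = p 0 :=
  if_pos (Nat.zero_le a)

lemma seqAppend_apply_of_le {a u : ℕ} {p q : ℕ → V} (hpq : p a = q 0) (hu : a ≤ u) :
    seqAppend a p q u = q (u - a) := by
  unfold seqAppend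
  split_ifs with h
  · rw [show u = a by omega, hpq, Nat.sub_self]
  · rfl

lemma seqAppend_mem {a b : ℕ} {p q : ℕ → V} {T : Set V} (hp : ∀ s ≤ a, p s ∈ T)
    (hq : ∀ t ≤ b, q t ∈ T) : ∀ u ≤ a + b, seqAppend a p q u ∈ T := by
  intro u hu
  unfold seqAppend
  split_ifs with h
  · exact hp u h
  · exact hq (u - a) (by omega)

lemma PathSeq.reverse {b : ℕ} {q : ℕ → V} (hq : PathSeq G b q) :
    PathSeq G b (seqReverse b q) := by
  refine ⟨fun u hu => ?_, fun u w huw hw => (hq.2 (b - w) (b - u) (by omega) (by omega)).symm⟩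
  have hadj := (hq.1 (b - (u + 1)) (by omega)).symm
  rwa [show b - (u + 1) + 1 = b - u by omega] at hadj

lemma PathSeq.append {a b : ℕ} {p q : ℕ → V} (hp : PathSeq G a p) (hq : PathSeq G b q)
    (hpq : p a = q 0) (hdisj : ∀ s ≤ a, ∀ t, 0 < t → t ≤ b → p s ≠ q t) :
    PathSeq G (a + b) (seqAppend a p q) := by
  have hleft : ∀ u ≤ a, seqAppend a p q u = p u := fun u hu => if_pos hu
  have hright : ∀ u, a ≤ u → seqAppend a p q u = q (u - a) :=
    fun u => seqAppend_apply_of_le hpq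
  refine ⟨fun u hu => ?_, fun u w huw hw => ?_⟩
  · rcases lt_or_ge u a with h | h
    · rw [hleft u h.le, hleft (u + 1) h]
      exact hp.1 u h
    · rw [hright u h, hright (u + 1) (by omega), show u + 1 - a = u - a + 1 by omega]
      exact hq.1 _ (by omega)
  · rcases le_or_gt w a with hwa | hwa
    · rw [hleft u (by omega), hleft w hwa]
      exact hp.2 u w huw hwa
    · rw [hright w hwa.le]
      rcases le_or_gt u a with hua | hua
      · rw [hleft u hua]
        exact hdisj u hua (w - a) (by omega) (by omega)
      · rw [hright u hua.le]
        exact hq.2 _ _ (by omega) (by omega)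

lemma exists_pathSeq_of_bridge {i m j : ℕ} {P M Q : ℕ → V} {T : Set V}
    (hP : PathSeq G i P) (hM : PathSeq G m M) (hQ : PathSeq G j Q)
    (hM0 : M 0 = P i) (hMm : M m = Q j) (hPQ : ∀ s ≤ i, ∀ t ≤ j, P s ≠ Q t)
    (hMP : ∀ r, 0 < r → r < m → ∀ s ≤ i, M r ≠ P s)
    (hMQ : ∀ r, 0 < r → r < m → ∀ t ≤ j, M r ≠ Q t)
    (hPT : ∀ s ≤ i, P s ∈ T) (hMT : ∀ r, 0 < r → r < m → M r ∈ T) (hQT : ∀ t ≤ j, Q t ∈ T) :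
    ∃ R, PathSeq G (i + m + j) R ∧ R 0 = P 0 ∧ R (i + m + j) = Q 0 ∧
      ∀ u ≤ i + m + j, R u ∈ T := by
  set Qr := seqReverse j Q
  set N := seqAppend m M Qr with hNdef
  have hMQr : M m = Qr 0 := by simp [Qr, seqReverse, hMm]
  have hN : PathSeq G (m + j) N := by
    refine hM.append hQ.reverse hMQr fun r hr t ht htj => ?_
    show M r ≠ Q (j - t)
    rcases Nat.eq_zero_or_pos r with rfl | hr0
    · rw [hM0]
      exact hPQ i le_rfl _ (by omega)
    rcases lt_or_eq_of_le hr with hrm | rfl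
    · exact hMQ r hr0 hrm _ (by omega)
    · rw [hMm]
      exact (hQ.2 (j - t) j (by omega) le_rfl).symm
  have hPN : P i = N 0 := by rw [hNdef, seqAppend_apply_zero, hM0]
  have hR := hP.append hN hPN fun s hs t ht htmj => by
    rcases le_or_gt t m with htm | htm
    · rw [show N t = M t from if_pos htm]
      rcases lt_or_eq_of_le htm with htm | rfl
      · exact (hMP t ht htm s hs).symm
      · rw [hMm]
        exact hPQ s hs j le_rfl
    · rw [hNdef, seqAppend_apply_of_le hMQr htm.le]
      exact hPQ s hs _ (by omega)
  have hNT : ∀ t ≤ m + j, N t ∈ T := by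
    refine seqAppend_mem (fun r hr => ?_) fun t ht => hQT _ (by omega)
    rcases Nat.eq_zero_or_pos r with rfl | hr0
    · exact hM0 ▸ hPT i le_rfl
    rcases lt_or_eq_of_le hr with hrm | rfl
    · exact hMT r hr0 hrm
    · exact hMm ▸ hQT j le_rfl
  refine ⟨seqAppend i P N, by rwa [add_assoc], seqAppend_apply_zero _ _ _, ?_,
    by rw [add_assoc]; exact seqAppend_mem hPT hNT⟩
  rw [add_assoc, seqAppend_apply_of_le hPN (by omega), Nat.add_sub_cancel_left,
    hNdef, seqAppend_apply_of_le hMQr (by omega), Nat.add_sub_cancel_left]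
  simp [Qr, seqReverse]

end Sequences

section Walks

variable {G : SimpleGraph V} {D : ℝ}

lemma PadSeq.ext {ℓ : ℕ} {p q : ℕ → V} (hp : PadSeq ℓ p) (hq : PadSeq ℓ q)
    (h : ∀ a ≤ ℓ, p a = q a) : p = q := by
  funext a
  rcases le_or_gt a ℓ with ha | ha
  · exact h a ha
  · rw [hp a ha.le, hq a ha.le, h ℓ le_rfl]

def walksFrom (G : SimpleGraph V) (ℓ : ℕ) (x : V) : Set (ℕ → V) :=
  {p | p 0 = x ∧ PadSeq ℓ p ∧ ∀ a < ℓ, G.Adj (p a) (p (a + 1))}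

lemma PathSeq.mem_walksFrom {ℓ : ℕ} {x : V} {p : ℕ → V} (hp : PathSeq G ℓ p) (h0 : p 0 = x)
    (hpad : PadSeq ℓ p) : p ∈ walksFrom G ℓ x :=
  ⟨h0, hpad, hp.1⟩

variable [Finite V]

lemma walksFrom_finite (G : SimpleGraph V) (ℓ : ℕ) (x : V) : (walksFrom G ℓ x).Finite := by
  refine Set.Finite.of_finite_image (f := fun p (a : Fin (ℓ + 1)) => p a) (Set.toFinite _) ?_
  intro p hp q hq hpq
  exact hp.2.1.ext hq.2.1 fun a ha => congrFun hpq ⟨a, by omega⟩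

lemma ncard_walksFrom_succ_inter_le {ℓ : ℕ} {x : V} (C : Set (ℕ → V)) (u : V) :
    (walksFrom G (ℓ + 1) x ∩ {p | (fun a => p (a + 1)) ∈ C} ∩ {p | p 1 = u}).ncard ≤
      (walksFrom G ℓ u ∩ C).ncard := by
  refine Set.ncard_le_ncard_of_injOn (fun p a => p (a + 1)) ?_ ?_
    ((walksFrom_finite G ℓ u).inter_of_left C)
  · rintro p ⟨⟨⟨-, hpad, hadj⟩, hC⟩, hp1⟩
    exact ⟨⟨hp1, fun a ha => (hpad (a + 1) (by omega)).trans (hpad (ℓ + 1) le_rfl).symm,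
      fun a ha => hadj (a + 1) (by omega)⟩, hC⟩
  · rintro p ⟨⟨⟨hp0, -⟩, -⟩, -⟩ q ⟨⟨⟨hq0, -⟩, -⟩, -⟩ hpq
    funext a
    cases a with
    | zero => rw [hp0, hq0]
    | succ a => exact congrFun hpq a

lemma ncard_walksFrom_succ_le (hdeg : ∀ v, ((G.neighborSet v).ncard : ℝ) ≤ D) {ℓ : ℕ} {x : V}
    {C : Set (ℕ → V)} {c : ℝ} (hc : 0 ≤ c) (hC : ∀ u, ((walksFrom G ℓ u ∩ C).ncard : ℝ) ≤ c) :
    ((walksFrom G (ℓ + 1) x ∩ {p | (fun a => p (a + 1)) ∈ C}).ncard : ℝ) ≤ D * c := by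
  have hN := (G.neighborSet x).toFinite
  have hcover : walksFrom G (ℓ + 1) x ∩ {p | (fun a => p (a + 1)) ∈ C} ⊆
      ⋃ u ∈ hN.toFinset, {p | p 1 = u} := by
    rintro p ⟨⟨hp0, -, hadj⟩, -⟩
    refine Set.mem_iUnion₂.2 ⟨p 1, hN.mem_toFinset.2 ?_, rfl⟩
    simpa [hp0] using hadj 0 (Nat.succ_pos ℓ)
  calc _ ≤ hN.toFinset.card * c := ncard_le_card_mul_of_subset_biUnion hcover fun u _ =>
        (Nat.cast_le.2 (ncard_walksFrom_succ_inter_le C u)).trans (hC u)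
    _ ≤ D * c := by
        rw [← Set.ncard_eq_toFinset_card _ hN]
        exact mul_le_mul_of_nonneg_right (hdeg x) hc

lemma ncard_walksFrom_le (hdeg : ∀ v, ((G.neighborSet v).ncard : ℝ) ≤ D) (ℓ : ℕ) (x : V) :
    ((walksFrom G ℓ x).ncard : ℝ) ≤ D ^ ℓ := by
  have hD : 0 ≤ D := (Nat.cast_nonneg _).trans (hdeg x)
  induction ℓ generalizing x with
  | zero =>
    have hsub : walksFrom G 0 x ⊆ {fun _ => x} := fun p hp =>
      hp.2.1.ext (fun _ _ => rfl) fun a ha => by rw [Nat.le_zero.1 ha, hp.1]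
    simpa using Set.ncard_le_ncard hsub
  | succ ℓ ih =>
    simpa [pow_succ'] using
      ncard_walksFrom_succ_le hdeg (C := Set.univ) (x := x) (pow_nonneg hD ℓ) fun u => by
        simpa using ih u

lemma ncard_walksFrom_inter_apply_eq_le (hdeg : ∀ v, ((G.neighborSet v).ncard : ℝ) ≤ D)
    {ℓ t : ℕ} (ht : 0 < t) (htℓ : t ≤ ℓ) (x v : V) :
    ((walksFrom G ℓ x ∩ {p | p t = v}).ncard : ℝ) ≤ D ^ (ℓ - 1) := by
  have hD : 0 ≤ D := (Nat.cast_nonneg _).trans (hdeg v)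
  obtain ⟨ℓ, rfl⟩ : ∃ ℓ', ℓ = ℓ' + 1 := ⟨ℓ - 1, by omega⟩
  induction t, ht using Nat.le_induction generalizing ℓ x with
  | base =>
    have := ncard_walksFrom_succ_inter_le (G := G) (ℓ := ℓ) (x := x) Set.univ v
    simp only [Set.mem_univ, Set.ofPred_true, Set.inter_univ] at this
    exact (Nat.cast_le.2 this).trans (ncard_walksFrom_le hdeg ℓ v)
  | succ t ht ih =>
    obtain ⟨ℓ, rfl⟩ : ∃ ℓ', ℓ = ℓ' + 1 := ⟨ℓ - 1, by omega⟩
    calc _ ≤ D * D ^ ℓ :=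
          ncard_walksFrom_succ_le hdeg (C := {q | q t = v}) (pow_nonneg hD _)
            fun u => by simpa only [Nat.add_sub_cancel] using ih u ℓ (by omega)
      _ = D ^ (ℓ + 1 + 1 - 1) := by rw [← pow_succ']; rfl

end Walks

section WalkPairs

variable [Finite V] {G : SimpleGraph V} {D : ℝ} {i j : ℕ} {x y : V}

lemma ncard_walksFrom_prod_inter_fst_le (hdeg : ∀ v, ((G.neighborSet v).ncard : ℝ) ≤ D)
    {s : ℕ} (hs : 0 < s) (hsi : s ≤ i) (v : V) :
    (((walksFrom G i x ×ˢ walksFrom G j y) ∩ {z | z.1 s = v}).ncard : ℝ) ≤ D ^ (i + j - 1) := by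
  have hD : 0 ≤ D := (Nat.cast_nonneg _).trans (hdeg v)
  calc _ ≤ D ^ (i - 1) * D ^ j :=
        ncard_le_mul_of_fiber_le ((walksFrom_finite G i x).inter_of_left _)
          (fun z hz => ⟨hz.1.1, hz.2⟩) (ncard_walksFrom_inter_apply_eq_le hdeg hs hsi x v)
          (fun p _ => (Nat.cast_le.2 (Set.ncard_le_ncard (fun q hq => hq.1.2)
            (walksFrom_finite G j y))).trans (ncard_walksFrom_le hdeg j y))
          (pow_nonneg hD j)
    _ = D ^ (i + j - 1) := by rw [← pow_add, show i - 1 + j = i + j - 1 by omega]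

lemma ncard_walksFrom_prod_inter_snd_le (hdeg : ∀ v, ((G.neighborSet v).ncard : ℝ) ≤ D)
    {t : ℕ} (ht : 0 < t) (htj : t ≤ j) (g : (ℕ → V) → V) :
    (((walksFrom G i x ×ˢ walksFrom G j y) ∩ {z | z.2 t = g z.1}).ncard : ℝ) ≤
      D ^ (i + j - 1) := by
  have hD : 0 ≤ D := (Nat.cast_nonneg _).trans (hdeg x)
  calc _ ≤ D ^ i * D ^ (j - 1) :=
        ncard_le_mul_of_fiber_le (walksFrom_finite G i x) (fun z hz => hz.1.1)
          (ncard_walksFrom_le hdeg i x)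
          (fun p _ => (Nat.cast_le.2 (Set.ncard_le_ncard
            (t := walksFrom G j y ∩ {q | q t = g p}) (fun q hq => ⟨hq.1.2, hq.2⟩)
            ((walksFrom_finite G j y).inter_of_left _))).trans
              (ncard_walksFrom_inter_apply_eq_le hdeg ht htj y (g p)))
          (pow_nonneg hD _)
    _ = D ^ (i + j - 1) := by rw [← pow_add, show i + (j - 1) = i + j - 1 by omega]

/-- A union bound over the `i * #X + j * #Y + i * j` coincidences to be avoided, each of which
pins a vertex of a walk and so is met by at most `D ^ (i + j - 1)` pairs of walks. -/
lemma exists_pair_avoiding_of_lt_ncard (hdeg : ∀ v, ((G.neighborSet v).ncard : ℝ) ≤ D)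
    {S : Set ((ℕ → V) × (ℕ → V))} (hS : S ⊆ walksFrom G i x ×ˢ walksFrom G j y)
    (X Y : Finset V)
    (hlt : ((i * X.card + j * Y.card + i * j : ℕ) : ℝ) * D ^ (i + j - 1) < S.ncard) :
    ∃ P Q, (P, Q) ∈ S ∧ (∀ s, 0 < s → s ≤ i → P s ∉ X) ∧ (∀ t, 0 < t → t ≤ j → Q t ∉ Y) ∧
      ∀ s t, 0 < s → s ≤ i → 0 < t → t ≤ j → P s ≠ Q t := by
  set E : Finset ((ℕ × V) ⊕ (ℕ × V) ⊕ (ℕ × ℕ)) :=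
    (Finset.Icc 1 i ×ˢ X).disjSum ((Finset.Icc 1 j ×ˢ Y).disjSum
      (Finset.Icc 1 i ×ˢ Finset.Icc 1 j))
  set B : (ℕ × V) ⊕ (ℕ × V) ⊕ (ℕ × ℕ) → Set ((ℕ → V) × (ℕ → V)) :=
    Sum.elim (fun e => {z | z.1 e.1 = e.2})
      (Sum.elim (fun e => {z | z.2 e.1 = e.2}) fun e => {z | z.2 e.2 = z.1 e.1})
  have hE : E.card = i * X.card + j * Y.card + i * j := by
    simp only [E, Finset.card_disjSum, Finset.card_product, Nat.card_Icc, Nat.add_sub_cancel]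
    ring
  have hB : ∀ e ∈ E, ((S ∩ B e).ncard : ℝ) ≤ D ^ (i + j - 1) := by
    have hmono : ∀ e, (((walksFrom G i x ×ˢ walksFrom G j y) ∩ B e).ncard : ℝ) ≤
        D ^ (i + j - 1) → ((S ∩ B e).ncard : ℝ) ≤ D ^ (i + j - 1) := fun e he =>
      (Nat.cast_le.2 (Set.ncard_le_ncard (Set.inter_subset_inter_left _ hS)
        (((walksFrom_finite G i x).prod (walksFrom_finite G j y)).inter_of_left _))).trans he
    rintro (⟨s, v⟩ | ⟨t, v⟩ | ⟨s, t⟩) he <;>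
      simp only [E, Finset.inl_mem_disjSum, Finset.inr_mem_disjSum, Finset.mem_product,
        Finset.mem_Icc] at he <;> apply hmono
    · exact ncard_walksFrom_prod_inter_fst_le hdeg he.1.1 he.1.2 v
    · exact ncard_walksFrom_prod_inter_snd_le hdeg he.1.1 he.1.2 fun _ => v
    · exact ncard_walksFrom_prod_inter_snd_le hdeg he.2.1 he.2.2 fun P => P s
  obtain ⟨⟨P, Q⟩, hPQ, havoid⟩ : ∃ z ∈ S, ∀ e ∈ E, z ∉ B e := by
    by_contra! hcover
    have hsub : S ⊆ ⋃ e ∈ E, B e := fun z hz => by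
      obtain ⟨e, he, hze⟩ := hcover z hz
      exact Set.mem_iUnion₂.2 ⟨e, he, hze⟩
    have := ncard_le_card_mul_of_subset_biUnion hsub hB
    rw [hE] at this
    exact hlt.not_ge this
  refine ⟨P, Q, hPQ, fun s hs hsi hsX => havoid (.inl (s, P s)) ?_ rfl,
    fun t ht htj htY => havoid (.inr (.inl (t, Q t))) ?_ rfl,
    fun s t hs hsi ht htj hst => havoid (.inr (.inr (s, t))) ?_ hst.symm⟩
  · exact Finset.inl_mem_disjSum.2 (Finset.mem_product.2 ⟨Finset.mem_Icc.2 ⟨hs, hsi⟩, hsX⟩)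
  · exact Finset.inr_mem_disjSum.2 (Finset.inl_mem_disjSum.2
      (Finset.mem_product.2 ⟨Finset.mem_Icc.2 ⟨ht, htj⟩, htY⟩))
  · exact Finset.inr_mem_disjSum.2 (Finset.inr_mem_disjSum.2
      (Finset.mem_product.2 ⟨Finset.mem_Icc.2 ⟨hs, hsi⟩, Finset.mem_Icc.2 ⟨ht, htj⟩⟩))

end WalkPairs

section DisjointPaths

variable {G : SimpleGraph V}

lemma ManyDisjointPaths.exists_avoiding {m N : ℕ} {u v : V}
    (hM : ManyDisjointPaths G m u v N) (B : Finset V) (hB : B.card < N) :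
    ∃ M, PathSeq G m M ∧ M 0 = u ∧ M m = v ∧ ∀ r, 0 < r → r < m → M r ∉ B := by
  obtain ⟨M, hM, -, hdisj⟩ := hM
  by_contra! hhit
  choose r hr0 hrm hrB using fun a => hhit (M a) (hM a).1 (hM a).2.1 (hM a).2.2
  have hinj : Function.Injective fun a => M a (r a) := fun a b hab => by
    by_contra hne
    exact hdisj a b hne _ _ (hr0 a) (hrm a) (hr0 b) (hrm b) hab
  have := Finset.card_le_card_of_injOn (s := Finset.univ) _ (fun a _ => hrB a) hinj.injOn
  simp only [Finset.card_univ, Fintype.card_fin] at this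
  omega

lemma ManyDisjointPaths.succ {ℓ n : ℕ} {x y : V} (hP : ManyDisjointPaths G ℓ x y n)
    (hℓ : 2 ≤ ℓ)
    (hnew : ∀ F : Finset V, F.card ≤ n * (ℓ - 1) → x ∉ F → y ∉ F →
      ∃ R, PathSeq G ℓ R ∧ R 0 = x ∧ R ℓ = y ∧ ∀ u ≤ ℓ, R u ∉ F) :
    ManyDisjointPaths G ℓ x y (n + 1) := by
  classical
  obtain ⟨P, hP, -, hdisj⟩ := hP
  set F := (Finset.univ ×ˢ Finset.Ioo 0 ℓ).image fun z : Fin n × ℕ => P z.1 z.2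
  have hmemF : ∀ a t, 0 < t → t < ℓ → P a t ∈ F := fun a t ht htℓ =>
    Finset.mem_image.2
      ⟨(a, t), Finset.mem_product.2 ⟨Finset.mem_univ a, Finset.mem_Ioo.2 ⟨ht, htℓ⟩⟩, rfl⟩
  have hFcard : F.card ≤ n * (ℓ - 1) :=
    Finset.card_image_le.trans (by simp)
  have hxF : x ∉ F := by
    simp only [F, Finset.mem_image, Finset.mem_product, Finset.mem_Ioo, not_exists, not_and]
    rintro ⟨a, t⟩ ⟨-, ht, htℓ⟩ hx
    exact (hP a).1.2 0 t ht htℓ.le ((hP a).2.1.trans hx.symm)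
  have hyF : y ∉ F := by
    simp only [F, Finset.mem_image, Finset.mem_product, Finset.mem_Ioo, not_exists, not_and]
    rintro ⟨a, t⟩ ⟨-, ht, htℓ⟩ hy
    exact (hP a).1.2 t ℓ htℓ le_rfl (hy.trans (hP a).2.2.symm)
  obtain ⟨R, hR, hR0, hRℓ, hRF⟩ := hnew F hFcard hxF hyF
  have hdisj' : ∀ a b : Fin (n + 1), a ≠ b → ∀ s t, 0 < s → s < ℓ → 0 < t → t < ℓ →
      Fin.snoc (α := fun _ => ℕ → V) P R a s ≠ Fin.snoc (α := fun _ => ℕ → V) P R b t := by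
    intro a b hab s t hs hsℓ ht htℓ
    induction a using Fin.lastCases <;> induction b using Fin.lastCases <;>
      simp only [Fin.snoc_last, Fin.snoc_castSucc]
    · exact absurd rfl hab
    · exact fun h => hRF s hsℓ.le (h ▸ hmemF _ t ht htℓ)
    · exact fun h => hRF t htℓ.le (h ▸ hmemF _ s hs hsℓ)
    · exact hdisj _ _ (fun h => hab (congrArg _ h)) s t hs hsℓ ht htℓ
  refine ⟨Fin.snoc P R, fun a => ?_, fun a b hab => ⟨1, by omega, hdisj' a b hab 1 1
    Nat.one_pos (by omega) Nat.one_pos (by omega)⟩, hdisj'⟩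
  induction a using Fin.lastCases <;> simp only [Fin.snoc_last, Fin.snoc_castSucc]
  · exact ⟨hR, hR0, hRℓ⟩
  · exact hP _

end DisjointPaths

section RichPairs

variable {G : SimpleGraph V} {k h i j : ℕ} {K δ : ℝ} {x y : V}

def richPairs (G : SimpleGraph V) (k h i j : ℕ) (x y : V) : Set ((ℕ → V) × (ℕ → V)) :=
  {PQ | PathSeq G i PQ.1 ∧ PQ.1 0 = x ∧ PadSeq i PQ.1 ∧
    PathSeq G j PQ.2 ∧ PQ.2 0 = y ∧ PadSeq j PQ.2 ∧
    ManyDisjointPaths G (2 * k - i - j) (PQ.1 i) (PQ.2 j) ((h + 2) * (2 * k + 1) + 1)}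

lemma richPairs_subset : richPairs G k h i j x y ⊆ walksFrom G i x ×ˢ walksFrom G j y :=
  fun _ ⟨hP, hP0, hPpad, hQ, hQ0, hQpad, _⟩ =>
    ⟨hP.mem_walksFrom hP0 hPpad, hQ.mem_walksFrom hQ0 hQpad⟩

lemma Rich.mul_pow_lt_ncard (hrich : Rich G k h K δ i j x y) (hD : 0 ≤ K * δ) {a b : ℕ}
    (ha : a ≤ 2 * h * (2 * k + 1)) (hb : b ≤ 2 * h * (2 * k + 1)) :
    ((i * a + j * b + i * j : ℕ) : ℝ) * (K * δ) ^ (i + j - 1) <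
      (richPairs G k h i j x y).ncard := by
  refine lt_of_le_of_lt ?_ hrich.2
  -- the exponents (`-1` in `ℤ`, `0` in `ℕ`) differ only for `i = j = 0`, where both sides vanish
  rcases Nat.eq_zero_or_pos (i + j) with hij | hij
  · obtain ⟨rfl, rfl⟩ : i = 0 ∧ j = 0 := by omega
    simp
  have hcoef : i * a + j * b + i * j ≤ 2 * (i + j) * h * (2 * k + 1) + 2 * (i + 1) * j := by
    nlinarith [Nat.mul_le_mul_left i ha, Nat.mul_le_mul_left j hb]
  rw [show (i : ℤ) + j - 1 = ((i + j - 1 : ℕ) : ℤ) by omega, zpow_natCast]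
  exact mul_le_mul_of_nonneg_right (by exact_mod_cast hcoef) (pow_nonneg hD _)

variable [Finite V]

lemma Rich.exists_pair_avoiding (hrich : Rich G k h K δ i j x y)
    (hdeg : ∀ v, ((G.neighborSet v).ncard : ℝ) ≤ K * δ) {F : Finset V}
    (hF : F.card < h * (2 * k + 1)) (hxF : x ∉ F) (hyF : y ∉ F) :
    ∃ P Q, PathSeq G i P ∧ P 0 = x ∧ PathSeq G j Q ∧ Q 0 = y ∧
      ManyDisjointPaths G (2 * k - i - j) (P i) (Q j) ((h + 2) * (2 * k + 1) + 1) ∧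
      (∀ s ≤ i, P s ∉ F) ∧ (∀ t ≤ j, Q t ∉ F) ∧ ∀ s ≤ i, ∀ t ≤ j, P s ≠ Q t := by
  classical
  have hD : 0 ≤ K * δ := (Nat.cast_nonneg _).trans (hdeg x)
  have hcard : ∀ v, (insert v F).card ≤ 2 * h * (2 * k + 1) := fun v =>
    (Finset.card_insert_le v F).trans (by nlinarith)
  obtain ⟨P, Q, ⟨hP, hP0, -, hQ, hQ0, -, hmid⟩, hPX, hQY, hPQ⟩ :=
    exists_pair_avoiding_of_lt_ncard hdeg richPairs_subset (insert y F) (insert x F)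
      (hrich.mul_pow_lt_ncard hD (hcard y) (hcard x))
  dsimp only at hP hP0 hQ hQ0 hmid
  refine ⟨P, Q, hP, hP0, hQ, hQ0, hmid, fun s hs => ?_, fun t ht => ?_, fun s hs t ht => ?_⟩
  · rcases Nat.eq_zero_or_pos s with rfl | hs0
    · rwa [hP0]
    · exact fun hsF => hPX s hs0 hs (Finset.mem_insert_of_mem hsF)
  · rcases Nat.eq_zero_or_pos t with rfl | ht0
    · rwa [hQ0]
    · exact fun htF => hQY t ht0 ht (Finset.mem_insert_of_mem htF)
  rcases Nat.eq_zero_or_pos s with rfl | hs0 <;> rcases Nat.eq_zero_or_pos t with rfl | ht0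
  · rw [hP0, hQ0]
    exact hrich.1
  · rw [hP0]
    exact fun hxQ => hQY t ht0 ht (hxQ ▸ Finset.mem_insert_self x F)
  · rw [hQ0]
    exact fun hPy => hPX s hs0 hs (hPy ▸ Finset.mem_insert_self y F)
  · exact hPQ s t hs0 hs ht0 ht

lemma Rich.exists_path_avoiding (hrich : Rich G k h K δ i j x y)
    (hdeg : ∀ v, ((G.neighborSet v).ncard : ℝ) ≤ K * δ) (hij : i + j < 2 * k) {F : Finset V}
    (hF : F.card < h * (2 * k + 1)) (hxF : x ∉ F) (hyF : y ∉ F) :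
    ∃ R, PathSeq G (2 * k) R ∧ R 0 = x ∧ R (2 * k) = y ∧ ∀ u ≤ 2 * k, R u ∉ F := by
  classical
  obtain ⟨P, Q, hP, hP0, hQ, hQ0, hmid, hPF, hQF, hPQ⟩ :=
    hrich.exists_pair_avoiding hdeg hF hxF hyF
  set B := F ∪ (Finset.range (i + 1)).image P ∪ (Finset.range (j + 1)).image Q
  have hB : B.card < (h + 2) * (2 * k + 1) + 1 := by
    calc B.card
        ≤ (F ∪ (Finset.range (i + 1)).image P).card + ((Finset.range (j + 1)).image Q).card :=
          Finset.card_union_le _ _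
      _ ≤ F.card + ((Finset.range (i + 1)).image P).card +
          ((Finset.range (j + 1)).image Q).card := by grw [Finset.card_union_le]
      _ ≤ F.card + (i + 1) + (j + 1) := by
          grw [Finset.card_image_le, Finset.card_image_le, Finset.card_range, Finset.card_range]
      _ < (h + 2) * (2 * k + 1) + 1 := by nlinarith
  have hPB : ∀ s ≤ i, P s ∈ B := fun s hs =>
    Finset.mem_union_left _ (Finset.mem_union_right _
      (Finset.mem_image_of_mem P (Finset.mem_range.2 (Nat.lt_succ_of_le hs))))
  have hQB : ∀ t ≤ j, Q t ∈ B := fun t ht =>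
    Finset.mem_union_right _ (Finset.mem_image_of_mem Q (Finset.mem_range.2 (Nat.lt_succ_of_le ht)))
  obtain ⟨M, hM, hM0, hMm, hMB⟩ := hmid.exists_avoiding B hB
  obtain ⟨R, hR, hR0, hRend, hRF⟩ := exists_pathSeq_of_bridge (T := (↑F)ᶜ) hP hM hQ hM0 hMm hPQ
    (fun r hr hrm s hs hMP => hMB r hr hrm (hMP ▸ hPB s hs))
    (fun r hr hrm t ht hMQ => hMB r hr hrm (hMQ ▸ hQB t ht)) hPF
    (fun r hr hrm hMF => hMB r hr hrm (Finset.mem_union_left _ (Finset.mem_union_left _ hMF)))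
    hQF
  rw [show i + (2 * k - i - j) + j = 2 * k by omega] at hR hRend hRF
  exact ⟨R, hR, hR0.trans hP0, hRend.trans hQ0, hRF⟩

end RichPairs

theorem rich_pair_gives_disjoint_paths_general
    {V : Type*} [Fintype V] (G : SimpleGraph V)
    (k h : ℕ)
    (K δ : ℝ)
    (hmax : ∀ v : V, ((G.neighborSet v).ncard : ℝ) ≤ K * δ)
    (x y : V) (i j : ℕ) (hij : i + j < 2 * k)
    (hrich : Rich G k h K δ i j x y) :
    ManyDisjointPaths G (2 * k) x y h := by
  suffices ∀ n ≤ h, ManyDisjointPaths G (2 * k) x y n from this h le_rfl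
  intro n hn
  induction n with
  | zero => exact ⟨Fin.elim0, fun a => a.elim0, fun a => a.elim0, fun a => a.elim0⟩
  | succ n ih =>
    refine (ih (by omega)).succ (by omega) fun F hF hxF hyF =>
      hrich.exists_path_avoiding hmax hij (hF.trans_lt ?_) hxF hyF
    exact Nat.mul_lt_mul_of_lt_of_le (by omega) (by omega) (by omega)

/-- **Lemma 4.2.** Let `k, h ≥ 1`, `K, δ > 0`, and let `G` have maximum
degree at most `Kδ`. If `(x, y)` is `(i,j)`-rich (with `i + j < 2k`), then there exist `h`
pairwise internally vertex-disjoint paths of length `2k` between `x` and `y`. -/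
theorem rich_pair_gives_disjoint_paths
    {V : Type*} [Fintype V] [DecidableEq V] (G : SimpleGraph V)
    (k h : ℕ) (hk : 1 ≤ k) (hh : 1 ≤ h)
    (K δ : ℝ) (hK : 0 < K) (hδ : 0 < δ)
    (hmax : ∀ v : V, ((G.neighborSet v).ncard : ℝ) ≤ K * δ)
    (x y : V) (i j : ℕ) (hij : i + j < 2 * k)
    (hrich : Rich G k h K δ i j x y) :
    ManyDisjointPaths G (2 * k) x y h :=
  rich_pair_gives_disjoint_paths_general G k h K δ hmax x y i j hij hrich
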